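/- An element ξ ∈ H²(G, D) lies in the kernel of θ' if and only if ξ = inf(η) for some η ∈ H²(G/A, D) such that the restriction of η to H/A lies in the kernel of the inflation map H²(H/A, D) → H²(H, D), the restriction of η to K/A lies in the kernel of the inflation map H²(K/A, D) → H²(K, D), and ν₁(η) = 0, where ν₁ : H²(G/A, D) → Hom(H/A ⊗ K/A, D) is defined, for η represented by a 2-cocycle f, by ν₁(η)((hA)·(H/A)' ⊗ (kA)·(K/A)') = f(hA, kA) − f(kA, hA). In particular, Ker(θ') is contained in the image of the inflation map H²(G/A, D) → H²(G, D). -/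

import Mathlib

/-!
Setting (central products): `G` is a group with normal subgroups `H` and `K` such that
`G = HK` (i.e. `H ⊔ K = ⊤`) and `[H, K] = 1` (i.e. every element of `H` commutes with
every element of `K`).  We set `A = H ⊓ K` and `Z = ⁅H,H⁆ ⊓ ⁅K,K⁆`; both are central
in `G`.  Coefficients are taken in a divisible abelian group `D`, regarded as a trivial
module.  Second cohomology `H2 X D` is realized concretely as (inhomogeneous)
2-cocycles modulo 2-coboundaries, and `Hom(X, D)` is realized as `Additive X →+ D`.
-/

open scoped TensorProduct

set_option maxHeartbeats 1000000
set_option synthInstance.maxHeartbeats 1000000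
set_option synthInstance.maxSize 2000

namespace SchurCP

variable (G : Type) [Group G] (D : Type) [AddCommGroup D]

/-- The group of 2-cocycles on `G` with values in the trivial module `D`. -/
def cocycles2 : AddSubgroup (G → G → D) where
  carrier := {f | ∀ g h k : G, f g h + f (g * h) k = f h k + f g (h * k)}
  zero_mem' := by intro g h k; simp
  add_mem' := by
    intro a b ha hb g h k
    simp only [Pi.add_apply]
    rw [add_add_add_comm, ha g h k, hb g h k, add_add_add_comm]
  neg_mem' := by
    intro a ha g h k
    simp only [Pi.neg_apply]
    rw [← neg_add, ← neg_add, ha g h k]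

/-- The group of 2-coboundaries on `G` with values in the trivial module `D`. -/
def coboundaries2 : AddSubgroup (G → G → D) where
  carrier := {f | ∃ φ : G → D, ∀ g h : G, f g h = φ g + φ h - φ (g * h)}
  zero_mem' := ⟨0, by simp⟩
  add_mem' := by
    rintro a b ⟨φ, hφ⟩ ⟨ψ, hψ⟩
    exact ⟨φ + ψ, fun g h => by simp only [Pi.add_apply, hφ g h, hψ g h]; abel⟩
  neg_mem' := by
    rintro a ⟨φ, hφ⟩
    exact ⟨-φ, fun g h => by simp only [Pi.neg_apply, hφ g h]; abel⟩

/-- The second cohomology group `H²(G, D)` of `G` with coefficients in the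
trivial module `D`. -/
def H2 : Type := cocycles2 G D ⧸ (coboundaries2 G D).addSubgroupOf (cocycles2 G D)

instance : AddCommGroup (H2 G D) :=
  QuotientAddGroup.Quotient.addCommGroup ((coboundaries2 G D).addSubgroupOf (cocycles2 G D))

variable {G D}

/-- The cohomology class of a 2-cocycle. -/
abbrev H2mk (f : cocycles2 G D) : H2 G D := QuotientAddGroup.mk f

/-- Pullback of a 2-cocycle along a group homomorphism. -/
def pullCocycle {G' : Type} [Group G'] (π : G' →* G) :
    cocycles2 G D →+ cocycles2 G' D where
  toFun f := ⟨fun x y => (f : G → G → D) (π x) (π y), by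
    intro x y z
    simpa only [map_mul] using f.2 (π x) (π y) (π z)⟩
  map_zero' := rfl
  map_add' _ _ := rfl

/-- The homomorphism `H²(G, D) → H²(G', D)` induced by a group homomorphism
`π : G' → G`; this specializes to restriction maps (for inclusions of subgroups)
and to inflation maps (for quotient maps). -/
def H2Map {G' : Type} [Group G'] (π : G' →* G) : H2 G D →+ H2 G' D :=
  QuotientAddGroup.map _ _ (pullCocycle π) (by
    intro f hf
    rw [AddSubgroup.mem_addSubgroupOf] at hf
    rw [AddSubgroup.mem_comap, AddSubgroup.mem_addSubgroupOf]
    obtain ⟨φ, hφ⟩ := hf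
    exact ⟨fun x => φ (π x), fun x y => by
      show (f : G → G → D) (π x) (π y) = _
      rw [hφ (π x) (π y), ← map_mul]⟩)

theorem commutator_le_self {X : Type} [Group X] (H : Subgroup X) : ⁅H, H⁆ ≤ H := by
  rw [Subgroup.commutator_le]
  intro g₁ h₁ g₂ h₂
  rw [commutatorElement_def]
  exact H.mul_mem (H.mul_mem (H.mul_mem h₁ h₂) (H.inv_mem h₁)) (H.inv_mem h₂)

theorem inf_commutator_le_inf {X : Type} [Group X] (H K : Subgroup X) :
    ⁅H, H⁆ ⊓ ⁅K, K⁆ ≤ H ⊓ K :=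
  inf_le_inf (commutator_le_self H) (commutator_le_self K)

theorem subgroupOf_le {X : Type} [Group X] {B C : Subgroup X} (h : B ≤ C)
    (J : Subgroup X) : B.subgroupOf J ≤ C.subgroupOf J := fun _x hx => h hx

/-- The natural projection `X/N → X/M` for `N ≤ M`. -/
def quotProj {X : Type} [Group X] {N M : Subgroup X} [N.Normal] [M.Normal] (h : N ≤ M) :
    (X ⧸ N) →* (X ⧸ M) :=
  QuotientGroup.map N M (MonoidHom.id X) (by rwa [Subgroup.comap_id])

/-- The inflation homomorphism `H²(X/M, D) → H²(X/N, D)` for `N ≤ M`. -/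
def inflMap {X : Type} [Group X] {N M : Subgroup X} [N.Normal] [M.Normal]
    (h : N ≤ M) (D : Type) [AddCommGroup D] : H2 (X ⧸ M) D →+ H2 (X ⧸ N) D :=
  H2Map (quotProj h)

/-- The natural homomorphism `H/(A ∩ H) → X/A` for subgroups `A, H` of `X`;
for `A ≤ H` this realizes `H/A` as a subgroup of `X/A`. -/
def quotInclusion {X : Type} [Group X] (H A : Subgroup X) [A.Normal]
    [(A.subgroupOf H).Normal] : (↥H ⧸ A.subgroupOf H) →* X ⧸ A :=
  QuotientGroup.map (A.subgroupOf H) A H.subtype (fun _x hx => hx)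

/-- The abelian tensor product `X ⊗ Y = X/[X,X] ⊗_ℤ Y/[Y,Y]` of two groups. -/
abbrev AbTensor (X Y : Type) [Group X] [Group Y] : Type :=
  TensorProduct ℤ (Additive (Abelianization X)) (Additive (Abelianization Y))

/-- The element `x[X,X] ⊗ y[Y,Y]` of the abelian tensor product. -/
noncomputable abbrev tmulAb {X Y : Type} [Group X] [Group Y] (x : X) (y : Y) :
    AbTensor X Y :=
  Additive.ofMul (Abelianization.of x) ⊗ₜ[ℤ] Additive.ofMul (Abelianization.of y)

/-- The map on abelian tensor products induced by a pair of group homomorphisms. -/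
noncomputable def abTensorMap {X Y X' Y' : Type} [Group X] [Group Y] [Group X'] [Group Y']
    (f : X →* X') (g : Y →* Y') : AbTensor X Y →ₗ[ℤ] AbTensor X' Y' :=
  TensorProduct.map (MonoidHom.toAdditive (Abelianization.map f)).toIntLinearMap
    (MonoidHom.toAdditive (Abelianization.map g)).toIntLinearMap

/-!
Since `[H, K] = 1` and `G = HK`, the subgroup `A = H ∩ K` is central. Let `ξ = [f]` restrict to
zero on `H` and on `K`. Then `ξ` restricts to zero on `A`, and `f(g, a) = f(a, g)` for `a ∈ A`:
the defect `g ↦ f(g, a) - f(a, g)` is additive in `g` and vanishes on `H` and on `K`, where `f` is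
a coboundary. Subtracting a coboundary we may assume that `f` vanishes on `A × A`. Choosing a
transversal `s` of `A` and writing `x = s(x̄) a_x`, the cocycle identity then shows that `f` differs
by the coboundary of `x ↦ f(s(x̄), a_x)` from a cocycle pulled back from `G/A`; so `ξ = inf η`.
Since restriction and `ν` commute with inflation, the remaining conditions on `η` only restate
`θ'(inf η) = 0`.
-/

theorem coboundaries2_le_cocycles2 : coboundaries2 G D ≤ cocycles2 G D := by
  rintro f ⟨φ, hφ⟩ g h k
  simp only [hφ, mul_assoc]
  abel

theorem H2mk_eq_zero_iff (f : cocycles2 G D) :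
    H2mk f = 0 ↔ (f : G → G → D) ∈ coboundaries2 G D :=
  (QuotientAddGroup.eq_zero_iff f).trans AddSubgroup.mem_addSubgroupOf

theorem H2mk_eq_H2mk_iff (f f' : cocycles2 G D) :
    H2mk f = H2mk f' ↔ (f - f' : G → G → D) ∈ coboundaries2 G D :=
  sub_eq_zero.symm.trans (H2mk_eq_zero_iff (f - f'))

theorem H2Map_H2mk {G' : Type} [Group G'] (π : G' →* G) (f : cocycles2 G D) :
    H2Map π (H2mk f) = H2mk (pullCocycle π f) := rfl

theorem H2Map_H2Map {G₁ G₂ : Type} [Group G₁] [Group G₂] (π : G₁ →* G) (ρ : G₂ →* G₁)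
    (ξ : H2 G D) : H2Map ρ (H2Map π ξ) = H2Map (π.comp ρ) ξ :=
  QuotientAddGroup.induction_on ξ fun _ => rfl

theorem apply_comm_of_mem_coboundaries2 {f : G → G → D} (hf : f ∈ coboundaries2 G D)
    {g h : G} (hgh : Commute g h) : f g h = f h g := by
  obtain ⟨φ, hφ⟩ := hf
  rw [hφ, hφ, hgh.eq, add_comm (φ g)]

theorem H2Map_subtype_eq_zero_of_le {A H : Subgroup G} (hAH : A ≤ H) {ξ : H2 G D}
    (hξ : H2Map H.subtype ξ = 0) : H2Map A.subtype ξ = 0 := by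
  rw [← Subgroup.subtype_comp_inclusion hAH, ← H2Map_H2Map, hξ, map_zero]

theorem apply_comm_of_H2Map_subtype_eq_zero {H : Subgroup G} {f : cocycles2 G D}
    (hres : H2Map H.subtype (H2mk f) = 0) {x y : G} (hx : x ∈ H) (hy : y ∈ H)
    (hxy : Commute x y) : (f : G → G → D) x y = (f : G → G → D) y x :=
  apply_comm_of_mem_coboundaries2 ((H2mk_eq_zero_iff _).mp hres)
    (g := (⟨x, hx⟩ : H)) (h := ⟨y, hy⟩) (Subtype.ext hxy.eq)

theorem mem_cocycles2_of_comp {G' : Type} [Group G'] {π : G' →* G}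
    (hπ : Function.Surjective π) {f : G → G → D}
    (hf : (fun x y => f (π x) (π y)) ∈ cocycles2 G' D) : f ∈ cocycles2 G D := by
  intro g h k
  obtain ⟨x, rfl⟩ := hπ g
  obtain ⟨y, rfl⟩ := hπ h
  obtain ⟨z, rfl⟩ := hπ k
  simpa only [map_mul] using hf x y z

section Central

variable {A : Subgroup G} {F : G → G → D} (hF : F ∈ cocycles2 G D)
include hF

theorem apply_mul_sub_swap {a g h : G} (hga : Commute g a) (hha : Commute h a) :
    F (g * h) a - F a (g * h) = (F g a - F a g) + (F h a - F a h) := by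
  have e1 := hF g h a
  have e2 := hF g a h
  have e3 := hF a g h
  rw [hha.eq] at e1
  rw [hga.eq] at e2
  linear_combination (norm := abel) e1 - e2 + e3

variable (h0 : ∀ a ∈ A, ∀ b ∈ A, F a b = 0)
include h0

theorem apply_mul_mul_of_vanishing (hA : A ≤ Subgroup.center G)
    (hsymm : ∀ a ∈ A, ∀ g, F g a = F a g) {a b : G} (ha : a ∈ A) (hb : b ∈ A) (g h : G) :
    F (g * a) (h * b) = F g h + F (g * h) (a * b) - F g a - F h b := by
  have hac : ∀ x, x * a = a * x := Subgroup.mem_center_iff.mp (hA ha)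
  have e1 := hF g a (h * b)
  have e2 := hF h b a
  have e3 := hF g h (a * b)
  rw [← mul_assoc, ← hac, mul_assoc] at e1
  rw [hac b, h0 b hb a ha] at e2
  linear_combination (norm := abel) e1 + e2 - e3 - hsymm a ha (h * b)

theorem exists_quotient_cocycle [A.Normal] (hA : A ≤ Subgroup.center G)
    (hsymm : ∀ a ∈ A, ∀ g, F g a = F a g) :
    ∃ f : G ⧸ A → G ⧸ A → D,
      (fun x y => F x y - f (x : G ⧸ A) (y : G ⧸ A)) ∈ coboundaries2 G D := by
  have hout : ∀ x : G, (x : G ⧸ A).out⁻¹ * x ∈ A :=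
    fun x => QuotientGroup.eq.mp (QuotientGroup.out_eq' _)
  refine ⟨fun q r => F q.out r.out - F (q * r).out ((q * r).out⁻¹ * (q.out * r.out)),
    fun x => -F (x : G ⧸ A).out ((x : G ⧸ A).out⁻¹ * x), fun x y => ?_⟩
  simp only [QuotientGroup.mk_mul]
  set u := (x : G ⧸ A).out
  set v := (y : G ⧸ A).out
  set w := ((x : G ⧸ A) * y).out
  set a := u⁻¹ * x
  set b := v⁻¹ * y
  set c := w⁻¹ * (u * v)
  have ha : a ∈ A := hout x
  have hb : b ∈ A := hout y
  have hc : c ∈ A := QuotientGroup.eq.mp <| by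
    rw [QuotientGroup.out_eq', QuotientGroup.mk_mul, QuotientGroup.out_eq',
      QuotientGroup.out_eq']
  have hxy : w⁻¹ * (x * y) = c * (a * b) := by
    have hav : a * v = v * a := (Subgroup.mem_center_iff.mp (hA ha) v).symm
    calc w⁻¹ * (x * y) = w⁻¹ * (u * (u⁻¹ * x * v) * (v⁻¹ * y)) := by group
      _ = w⁻¹ * (u * v) * (a * (v⁻¹ * y)) := by rw [hav]; group
  have hsplit := apply_mul_mul_of_vanishing hF h0 hA hsymm ha hb u v
  have hcocycle := hF w c (a * b)
  rw [mul_inv_cancel_left, mul_inv_cancel_left] at hsplit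
  rw [mul_inv_cancel_left, h0 c hc _ (A.mul_mem ha hb)] at hcocycle
  rw [hxy]
  linear_combination (norm := abel) hsplit + hcocycle

end Central

theorem mem_range_H2Map_mk' {A : Subgroup G} [A.Normal] (hA : A ≤ Subgroup.center G)
    (f : cocycles2 G D) (hres : H2Map A.subtype (H2mk f) = 0)
    (hsymm : ∀ a ∈ A, ∀ g, (f : G → G → D) g a = (f : G → G → D) a g) :
    H2mk f ∈ Set.range (H2Map (QuotientGroup.mk' A)) := by
  obtain ⟨φA, hφA⟩ := (H2mk_eq_zero_iff _).mp hres
  set φ : G → D := Function.extend Subtype.val φA 0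
  have hφ : ∀ a : A, φ a = φA a := Subtype.val_injective.extend_apply φA 0
  have hδφ : (fun g h => φ g + φ h - φ (g * h)) ∈ coboundaries2 G D := ⟨φ, fun _ _ => rfl⟩
  set F : G → G → D := fun g h => (f : G → G → D) g h - (φ g + φ h - φ (g * h))
  have hF : F ∈ cocycles2 G D := sub_mem f.2 (coboundaries2_le_cocycles2 hδφ)
  have h0 : ∀ a ∈ A, ∀ b ∈ A, F a b = 0 := fun a ha b hb => by
    simp only [F, sub_eq_zero]
    exact (hφA ⟨a, ha⟩ ⟨b, hb⟩).trans (by rw [← hφ, ← hφ, ← hφ]; rfl)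
  have hFsymm : ∀ a ∈ A, ∀ g, F g a = F a g := fun a ha g => by
    simp only [F, hsymm a ha g, add_comm (φ g), (Subgroup.mem_center_iff.mp (hA ha) g)]
  obtain ⟨fbar, hfbar⟩ := exists_quotient_cocycle hF h0 hA hFsymm
  have hfbar_mem : fbar ∈ cocycles2 (G ⧸ A) D := by
    refine mem_cocycles2_of_comp (QuotientGroup.mk'_surjective A) ?_
    convert sub_mem hF (coboundaries2_le_cocycles2 hfbar) using 1
    funext x y
    simp
  refine ⟨H2mk ⟨fbar, hfbar_mem⟩, ?_⟩
  rw [H2Map_H2mk, eq_comm, H2mk_eq_H2mk_iff]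
  convert add_mem hfbar hδφ using 1
  funext x y
  change (f : G → G → D) x y - fbar x y = _
  simp only [Pi.add_apply, F]
  abel

theorem abTensor_hom_ext {X Y : Type} [Group X] [Group Y] {μ μ' : AbTensor X Y →+ D}
    (h : ∀ x y, μ (tmulAb x y) = μ' (tmulAb x y)) : μ = μ' :=
  AddMonoidHom.toIntLinearMap_injective <| TensorProduct.ext' fun x y => by
    induction x using Additive.rec with | ofMul x => ?_
    induction y using Additive.rec with | ofMul y => ?_
    induction x using QuotientGroup.induction_on
    induction y using QuotientGroup.induction_on
    exact h _ _

theorem H2Map_quotInclusion_H2Map (H A : Subgroup G) [A.Normal] [(A.subgroupOf H).Normal]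
    (η : H2 (G ⧸ A) D) :
    H2Map (QuotientGroup.mk' (A.subgroupOf H)) (H2Map (quotInclusion H A) η) =
      H2Map H.subtype (H2Map (QuotientGroup.mk' A) η) := by
  rw [H2Map_H2Map, H2Map_H2Map]
  rfl

theorem nu₁_eq_zero_iff {H K A : Subgroup G} [A.Normal] [(A.subgroupOf H).Normal]
    [(A.subgroupOf K).Normal] {ν : H2 G D →+ (AbTensor H K →+ D)}
    (hν : ∀ f : cocycles2 G D, ∀ (h : H) (k : K),
      ν (H2mk f) (tmulAb h k) = (f : G → G → D) h k - (f : G → G → D) k h)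
    {ν₁ : H2 (G ⧸ A) D →+ (AbTensor (H ⧸ A.subgroupOf H) (K ⧸ A.subgroupOf K) →+ D)}
    (hν₁ : ∀ f : cocycles2 (G ⧸ A) D, ∀ (h : H) (k : K),
      ν₁ (H2mk f) (tmulAb (h : H ⧸ A.subgroupOf H) (k : K ⧸ A.subgroupOf K)) =
        (f : G ⧸ A → G ⧸ A → D) (h : G) (k : G) - (f : G ⧸ A → G ⧸ A → D) (k : G) (h : G))
    (η : H2 (G ⧸ A) D) : ν₁ η = 0 ↔ ν (H2Map (QuotientGroup.mk' A) η) = 0 := by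
  obtain ⟨f, rfl⟩ := QuotientAddGroup.mk_surjective η
  have hνν₁ : ∀ (h : H) (k : K),
      ν₁ (H2mk f) (tmulAb (h : H ⧸ A.subgroupOf H) (k : K ⧸ A.subgroupOf K)) =
        ν (H2Map (QuotientGroup.mk' A) (H2mk f)) (tmulAb h k) := fun h k => by
    rw [hν₁, H2Map_H2mk, hν]
    rfl
  constructor
  · intro h0
    exact abTensor_hom_ext fun h k => by rw [← hνν₁, h0]; rfl
  · intro h0
    refine abTensor_hom_ext fun h k => ?_
    induction h using QuotientGroup.induction_on
    induction k using QuotientGroup.induction_on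
    rw [hνν₁, h0]
    rfl

section CentralProduct

variable {H K : Subgroup G} [K.Normal] (hprod : H ⊔ K = ⊤)
  (hcomm : ∀ h ∈ H, ∀ k ∈ K, Commute h k)
include hprod

theorem exists_mul_eq_of_sup_eq_top (g : G) : ∃ h ∈ H, ∃ k ∈ K, h * k = g := by
  have hg : g ∈ ((H ⊔ K : Subgroup G) : Set G) := by rw [hprod]; trivial
  rwa [Subgroup.mul_normal, Set.mem_mul] at hg

include hcomm

theorem inf_le_center : H ⊓ K ≤ Subgroup.center G := fun a ha =>
  Subgroup.mem_center_iff.mpr fun g => by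
    obtain ⟨h, hh, k, hk, rfl⟩ := exists_mul_eq_of_sup_eq_top hprod g
    rw [mul_assoc, ← (hcomm a ha.1 k hk).eq, ← mul_assoc, (hcomm h hh a ha.2).eq, mul_assoc]

theorem apply_comm_of_mem_inf {f : cocycles2 G D} (hH : H2Map H.subtype (H2mk f) = 0)
    (hK : H2Map K.subtype (H2mk f) = 0) {a : G} (ha : a ∈ H ⊓ K) (g : G) :
    (f : G → G → D) g a = (f : G → G → D) a g := by
  have hcent : ∀ x, Commute x a := Subgroup.mem_center_iff.mp (inf_le_center hprod hcomm ha)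
  obtain ⟨h, hh, k, hk, rfl⟩ := exists_mul_eq_of_sup_eq_top hprod g
  rw [← sub_eq_zero, apply_mul_sub_swap f.2 (hcent h) (hcent k),
    apply_comm_of_H2Map_subtype_eq_zero hH hh ha.1 (hcent h),
    apply_comm_of_H2Map_subtype_eq_zero hK hk ha.2 (hcent k), sub_self, sub_self, add_zero]

end CentralProduct

theorem ker_theta'_general {G : Type} [Group G] (H K : Subgroup G) [K.Normal]
    (hprod : H ⊔ K = ⊤) (hcomm : ∀ h ∈ H, ∀ k ∈ K, Commute h k)
    (D : Type) [AddCommGroup D]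
    [(H ⊓ K).Normal] [((H ⊓ K).subgroupOf H).Normal] [((H ⊓ K).subgroupOf K).Normal]
    (ν : H2 G D →+ (AbTensor ↥H ↥K →+ D))
    (hν : ∀ f : cocycles2 G D, ∀ (h : ↥H) (k : ↥K),
      ν (H2mk f) (tmulAb h k) = (f : G → G → D) ↑h ↑k - (f : G → G → D) ↑k ↑h)
    (ν₁ : H2 (G ⧸ (H ⊓ K)) D →+
      (AbTensor (↥H ⧸ (H ⊓ K).subgroupOf H) (↥K ⧸ (H ⊓ K).subgroupOf K) →+ D))
    (hν₁ : ∀ f : cocycles2 (G ⧸ (H ⊓ K)) D, ∀ (h : ↥H) (k : ↥K),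
      ν₁ (H2mk f) (tmulAb (QuotientGroup.mk h : ↥H ⧸ (H ⊓ K).subgroupOf H)
          (QuotientGroup.mk k : ↥K ⧸ (H ⊓ K).subgroupOf K)) =
        (f : (G ⧸ (H ⊓ K)) → (G ⧸ (H ⊓ K)) → D)
            (QuotientGroup.mk (↑h : G)) (QuotientGroup.mk (↑k : G)) -
        (f : (G ⧸ (H ⊓ K)) → (G ⧸ (H ⊓ K)) → D)
            (QuotientGroup.mk (↑k : G)) (QuotientGroup.mk (↑h : G))) :
    (∀ ξ : H2 G D,
      (H2Map H.subtype ξ = 0 ∧ H2Map K.subtype ξ = 0 ∧ ν ξ = 0) ↔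
      ∃ η : H2 (G ⧸ (H ⊓ K)) D,
        ξ = H2Map (QuotientGroup.mk' (H ⊓ K)) η ∧
        H2Map (QuotientGroup.mk' ((H ⊓ K).subgroupOf H))
          (H2Map (quotInclusion H (H ⊓ K)) η) = 0 ∧
        H2Map (QuotientGroup.mk' ((H ⊓ K).subgroupOf K))
          (H2Map (quotInclusion K (H ⊓ K)) η) = 0 ∧
        ν₁ η = 0) ∧
    (∀ ξ : H2 G D, (H2Map H.subtype ξ = 0 ∧ H2Map K.subtype ξ = 0 ∧ ν ξ = 0) →
      ξ ∈ Set.range (H2Map (QuotientGroup.mk' (H ⊓ K)) : H2 (G ⧸ (H ⊓ K)) D →+ H2 G D)) := by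
  have hrange : ∀ ξ : H2 G D, (H2Map H.subtype ξ = 0 ∧ H2Map K.subtype ξ = 0 ∧ ν ξ = 0) →
      ξ ∈ Set.range (H2Map (QuotientGroup.mk' (H ⊓ K))) := by
    rintro ξ ⟨hH, hK, -⟩
    obtain ⟨f, rfl⟩ := QuotientAddGroup.mk_surjective ξ
    exact mem_range_H2Map_mk' (inf_le_center hprod hcomm) f
      (H2Map_subtype_eq_zero_of_le inf_le_left hH) fun a ha =>
        apply_comm_of_mem_inf hprod hcomm hH hK ha
  refine ⟨fun ξ => ?_, hrange⟩
  simp only [H2Map_quotInclusion_H2Map, nu₁_eq_zero_iff hν hν₁]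
  constructor
  · intro hξ
    obtain ⟨η, rfl⟩ := hrange ξ hξ
    exact ⟨η, rfl, hξ⟩
  · rintro ⟨η, rfl, hξ⟩
    exact hξ

/-- Description of the kernel of `θ' = (res, res, ν)`: a class `ξ ∈ H²(G, D)` lies
in `Ker θ'` iff `ξ = inf(η)` for some `η ∈ H²(G/A, D)` whose restrictions to `H/A`
and `K/A` lie in the kernels of the respective inflation maps and with `ν₁(η) = 0`.
In particular `Ker θ'` is contained in the image of `inf : H²(G/A, D) → H²(G, D)`. -/
theorem ker_theta' {G : Type} [Group G] (H K : Subgroup G) [H.Normal] [K.Normal]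
    (hprod : H ⊔ K = ⊤) (hcomm : ∀ h ∈ H, ∀ k ∈ K, Commute h k)
    (D : Type) [AddCommGroup D] [DivisibleBy D ℤ]
    [(H ⊓ K).Normal] [((H ⊓ K).subgroupOf H).Normal] [((H ⊓ K).subgroupOf K).Normal]
    (ν : H2 G D →+ (AbTensor ↥H ↥K →+ D))
    (hν : ∀ f : cocycles2 G D, ∀ (h : ↥H) (k : ↥K),
      ν (H2mk f) (tmulAb h k) = (f : G → G → D) ↑h ↑k - (f : G → G → D) ↑k ↑h)
    (ν₁ : H2 (G ⧸ (H ⊓ K)) D →+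
      (AbTensor (↥H ⧸ (H ⊓ K).subgroupOf H) (↥K ⧸ (H ⊓ K).subgroupOf K) →+ D))
    (hν₁ : ∀ f : cocycles2 (G ⧸ (H ⊓ K)) D, ∀ (h : ↥H) (k : ↥K),
      ν₁ (H2mk f) (tmulAb (QuotientGroup.mk h : ↥H ⧸ (H ⊓ K).subgroupOf H)
          (QuotientGroup.mk k : ↥K ⧸ (H ⊓ K).subgroupOf K)) =
        (f : (G ⧸ (H ⊓ K)) → (G ⧸ (H ⊓ K)) → D)
            (QuotientGroup.mk (↑h : G)) (QuotientGroup.mk (↑k : G)) -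
        (f : (G ⧸ (H ⊓ K)) → (G ⧸ (H ⊓ K)) → D)
            (QuotientGroup.mk (↑k : G)) (QuotientGroup.mk (↑h : G))) :
    (∀ ξ : H2 G D,
      (H2Map H.subtype ξ = 0 ∧ H2Map K.subtype ξ = 0 ∧ ν ξ = 0) ↔
      ∃ η : H2 (G ⧸ (H ⊓ K)) D,
        ξ = H2Map (QuotientGroup.mk' (H ⊓ K)) η ∧
        H2Map (QuotientGroup.mk' ((H ⊓ K).subgroupOf H))
          (H2Map (quotInclusion H (H ⊓ K)) η) = 0 ∧
        H2Map (QuotientGroup.mk' ((H ⊓ K).subgroupOf K))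
          (H2Map (quotInclusion K (H ⊓ K)) η) = 0 ∧
        ν₁ η = 0) ∧
    (∀ ξ : H2 G D, (H2Map H.subtype ξ = 0 ∧ H2Map K.subtype ξ = 0 ∧ ν ξ = 0) →
      ξ ∈ Set.range (H2Map (QuotientGroup.mk' (H ⊓ K)) : H2 (G ⧸ (H ⊓ K)) D →+ H2 G D)) :=
  ker_theta'_general H K hprod hcomm D ν hν ν₁ hν₁

end SchurCP
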